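/- Let c : ℕ × ℕ → ℤ satisfy c(n+1,k) = c(n,k) + c(n,k-1) for all n,k ≥ 1, with c(n,0) = a_n and c(1,k) = b_k for given sequences (a_n) and (b_k). Then for n ≥ 1 and k ≥ 1, c(n,k) = Σ_{r=k}^{n-1} C(r-1,k-1)·a_{n-r} + Σ_{r=0}^{k-1} C(n-1,r)·b_{k-r}. -/
import Mathlib

theorem aux (c : ℕ → ℕ → ℤ) (a b : ℕ → ℤ)
    (hrec : ∀ n k : ℕ, 1 ≤ n → 1 ≤ k → c (n + 1) k = c n k + c n (k - 1))
    (ha : ∀ n : ℕ, c n 0 = a n)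
    (hb : ∀ k : ℕ, c 1 k = b k) :
    ∀ m j : ℕ, c (m+1) (j+1) =
      (∑ i ∈ Finset.range (m - j), (Nat.choose (j+i) j : ℤ) * a (m - j - i)) +
      (∑ r ∈ Finset.range (j+1), (Nat.choose m r : ℤ) * b (j+1-r)) := by
  intro m
  induction m with
  | zero =>
    intro j
    simp only [Nat.zero_sub, Finset.range_zero, Finset.sum_empty, zero_add]
    rw [hb]
    rw [Finset.sum_eq_single_of_mem 0 (Finset.mem_range.mpr (Nat.succ_pos j))]
    · simp
    · intro r _ hr
      rcases Nat.exists_eq_succ_of_ne_zero hr with ⟨r', rfl⟩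
      simp [Nat.choose_eq_zero_of_lt (Nat.succ_pos r')]
  | succ m ih =>
    intro j
    have hr := hrec (m+1) (j+1) (Nat.le_add_left 1 m) (Nat.le_add_left 1 j)
    simp only [Nat.add_sub_cancel] at hr
    rw [hr]
    cases j with
    | zero =>
      rw [ha, ih 0]
      simp only [Nat.sub_zero, Nat.choose_zero_right, Nat.cast_one, one_mul]
      rw [Finset.sum_range_succ' (fun i => a (m + 1 - i))]
      simp only [Nat.succ_sub_succ, Nat.sub_zero]
      rw [Finset.sum_range_one, Finset.sum_range_one]
      simp only [Nat.choose_zero_right, Nat.cast_one, one_mul]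
      ring
    | succ j' =>
      rw [ih (j'+1), ih j']
      have hA : (∑ i ∈ Finset.range (m + 1 - (j'+1)),
            (Nat.choose (j'+1+i) (j'+1) : ℤ) * a (m + 1 - (j'+1) - i)) =
          (∑ i ∈ Finset.range (m - (j'+1)),
            (Nat.choose (j'+1+i) (j'+1) : ℤ) * a (m - (j'+1) - i)) +
          (∑ i ∈ Finset.range (m - j'),
            (Nat.choose (j'+i) j' : ℤ) * a (m - j' - i)) := by
        have h1 : m + 1 - (j'+1) = m - j' := by omega
        rw [h1]
        have h2 : ∀ i : ℕ, (Nat.choose (j'+1+i) (j'+1) : ℤ)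
            = (Nat.choose (j'+i) j' : ℤ) + (Nat.choose (j'+i) (j'+1) : ℤ) := by
          intro i
          have : j'+1+i = (j'+i)+1 := by omega
          rw [this, Nat.choose_succ_succ' (j'+i) j']
          push_cast; ring
        calc (∑ i ∈ Finset.range (m - j'),
              (Nat.choose (j'+1+i) (j'+1) : ℤ) * a (m - j' - i))
            = (∑ i ∈ Finset.range (m - j'),
              ((Nat.choose (j'+i) j' : ℤ) * a (m - j' - i)
               + (Nat.choose (j'+i) (j'+1) : ℤ) * a (m - j' - i))) := by
              refine Finset.sum_congr rfl fun i _ => ?_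
              rw [h2 i]; ring
          _ = (∑ i ∈ Finset.range (m - j'),
              (Nat.choose (j'+i) j' : ℤ) * a (m - j' - i))
              + (∑ i ∈ Finset.range (m - j'),
              (Nat.choose (j'+i) (j'+1) : ℤ) * a (m - j' - i)) := by
              rw [Finset.sum_add_distrib]
          _ = _ := by
              rw [add_comm]
              congr 1
              rcases Nat.eq_zero_or_pos (m - j') with h | h
              · rw [h]
                have : m - (j'+1) = 0 := by omega
                rw [this]
                simp
              · obtain ⟨t, ht⟩ : ∃ t, m - j' = t + 1 := ⟨m - j' - 1, by omega⟩
                rw [ht, Finset.sum_range_succ'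
                  (fun i => (Nat.choose (j'+i) (j'+1) : ℤ) * a (t + 1 - i)) t]
                have hz : (Nat.choose (j'+0) (j'+1) : ℤ) = 0 := by
                  simp [Nat.choose_succ_self]
                rw [hz, zero_mul, add_zero]
                have ht2 : m - (j'+1) = t := by omega
                rw [ht2]
                refine Finset.sum_congr rfl fun i _ => ?_
                have e1 : j' + (i+1) = j' + 1 + i := by omega
                rw [e1, Nat.succ_sub_succ]
      have hB : (∑ r ∈ Finset.range (j'+1+1), (Nat.choose (m+1) r : ℤ) * b (j'+1+1-r)) =
          (∑ r ∈ Finset.range (j'+1+1), (Nat.choose m r : ℤ) * b (j'+1+1-r)) +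
          (∑ r ∈ Finset.range (j'+1), (Nat.choose m r : ℤ) * b (j'+1-r)) := by
        rw [Finset.sum_range_succ' (fun r => (Nat.choose (m+1) r : ℤ) * b (j'+1+1-r)),
            Finset.sum_range_succ' (fun r => (Nat.choose m r : ℤ) * b (j'+1+1-r))]
        simp only [Nat.choose_succ_succ m, Nat.choose_zero_right, Nat.cast_one,
          Nat.cast_add, one_mul, add_mul, Finset.sum_add_distrib]
        have : (∑ r ∈ Finset.range (j'+1), (Nat.choose m r : ℤ) * b (j'+1+1-(r+1))) =
            (∑ r ∈ Finset.range (j'+1), (Nat.choose m r : ℤ) * b (j'+1-r)) := by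
          refine Finset.sum_congr rfl fun r _ => ?_
          have e1 : j' + 1 + 1 - (r + 1) = j' + 1 - r := by omega
          rw [e1]
        rw [this]
        ring
      rw [hA, hB]
      ring

theorem stmt (c : ℕ → ℕ → ℤ) (a b : ℕ → ℤ)
    (hrec : ∀ n k : ℕ, 1 ≤ n → 1 ≤ k → c (n + 1) k = c n k + c n (k - 1))
    (ha : ∀ n : ℕ, c n 0 = a n)
    (hb : ∀ k : ℕ, c 1 k = b k) :
    ∀ n k : ℕ, 1 ≤ n → 1 ≤ k →
      c n k = (∑ r ∈ Finset.Icc k (n - 1), (Nat.choose (r - 1) (k - 1) : ℤ) * a (n - r)) +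
        (∑ r ∈ Finset.range k, (Nat.choose (n - 1) r : ℤ) * b (k - r)) := by
  intro n k hn hk
  obtain ⟨m, rfl⟩ : ∃ m, n = m + 1 := ⟨n - 1, by omega⟩
  obtain ⟨j, rfl⟩ : ∃ j, k = j + 1 := ⟨k - 1, by omega⟩
  rw [aux c a b hrec ha hb m j]
  simp only [Nat.add_sub_cancel]
  congr 1
  rw [← Finset.Ico_add_one_right_eq_Icc, Finset.sum_Ico_eq_sum_range]
  have h1 : m + 1 - (j + 1) = m - j := by omega
  rw [h1]
  refine Finset.sum_congr rfl fun i _ => ?_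
  have e1 : j + 1 + i - 1 = j + i := by omega
  have e2 : m + 1 - (j + 1 + i) = m - j - i := by omega
  rw [e1, e2]
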